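/- In a rooted phylogenetic network N, for distinct leaves i, j, k: if there exist a common ancestor v of i and j with l_N − d(v,r) = h_N(i,j), a common ancestor w of i and k with l_N − d(w,r) = h_N(i,k), h_N(i,j) < h_N(i,k), and directed paths from v to i and j that are internally disjoint, then any directed path from w to k is internally disjoint from some path from v to i, yielding the node-disjoint path system witnessing consistency of ij|k with N. -/

import Mathlib

/-- A directed walk of length `n` (number of edges) from `u` to `v` in the digraph `E`. -/
def DiWalk {V : Type} (E : V → V → Prop) (u v : V) (n : ℕ) : Prop :=
  ∃ f : Fin (n + 1) → V, f 0 = u ∧ f (Fin.last n) = v ∧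
    ∀ i : Fin n, E (f i.castSucc) (f i.succ)

/-- A rooted phylogenetic network on the taxa set `X`: a finite rooted directed acyclic
graph in which every node is reachable from the root, the root has no incoming edge,
and the sinks are exactly the leaves, which are distinctly labeled by `X`. -/
structure PhyloNet (X : Type) where
  V : Type
  [fin : Fintype V]
  edge : V → V → Prop
  acyclic : ∀ v, ¬ Relation.TransGen edge v v
  root : V
  root_src : ∀ v, ¬ edge v root
  reach : ∀ v, Relation.ReflTransGen edge root v
  leaf : X → V
  leaf_inj : Function.Injective leaf
  leaf_sink : ∀ (x : X) (v : V), ¬ edge (leaf x) v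
  sink_leaf : ∀ v : V, (∀ w, ¬ edge v w) → ∃ x, v = leaf x

/-- `u` is an ancestor of `v` (there is a directed path from `u` to `v`). -/
def PhyloNet.anc {X : Type} (N : PhyloNet X) (u v : N.V) : Prop :=
  Relation.ReflTransGen N.edge u v

/-- `d(v,r)`: the length of the longest directed path from the root to `v`. -/
noncomputable def PhyloNet.dep {X : Type} (N : PhyloNet X) (v : N.V) : ℕ :=
  sSup {n | DiWalk N.edge N.root v n}

/-- `l_N`: the length of the longest directed path from the root to a leaf. -/
noncomputable def PhyloNet.lN {X : Type} (N : PhyloNet X) : ℕ :=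
  sSup {n | ∃ x : X, DiWalk N.edge N.root (N.leaf x) n}

/-- `c` is a lowest common ancestor of `u` and `v`: a common ancestor no proper
descendant of which is a common ancestor of `u` and `v`. -/
def PhyloNet.IsLCA {X : Type} (N : PhyloNet X) (u v c : N.V) : Prop :=
  N.anc c u ∧ N.anc c v ∧ ∀ w, N.anc c w → N.anc w u → N.anc w v → w = c

/-- The height function of the network `N`:
`h_N(i,j) = min { l_N − d(c,r) : c a lowest common ancestor of i and j }`. -/
noncomputable def PhyloNet.hN {X : Type} (N : PhyloNet X) (i j : X) : ℕ :=
  sInf {m | ∃ c : N.V, N.IsLCA (N.leaf i) (N.leaf j) c ∧ m = N.lN - N.dep c}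

/-- `f` is a directed path (walk with no repeated node) from `u` to `v`. -/
def IsDiPath {V : Type} (E : V → V → Prop) {n : ℕ} (f : Fin (n + 1) → V) (u v : V) : Prop :=
  f 0 = u ∧ f (Fin.last n) = v ∧ (∀ i : Fin n, E (f i.castSucc) (f i.succ)) ∧
    Function.Injective f

/-- Two paths are internally node-disjoint: every common node is an endpoint of both. -/
def IntDisj {V : Type} {m n : ℕ} (f : Fin (m + 1) → V) (g : Fin (n + 1) → V) : Prop :=
  ∀ (a : Fin (m + 1)) (b : Fin (n + 1)), f a = g b →
    (a = 0 ∨ a = Fin.last m) ∧ (b = 0 ∨ b = Fin.last n)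

/-- The triplet `ij|k` is consistent with the network `N`: `N` contains distinct nodes
`u`, `v` and pairwise internally node-disjoint directed paths
`u → i`, `u → j`, `v → u`, and `v → k`. -/
def PhyloNet.TripCons {X : Type} (N : PhyloNet X) (i j k : X) : Prop :=
  ∃ u v : N.V, u ≠ v ∧
    ∃ (a b c d : ℕ) (p : Fin (a + 1) → N.V) (q : Fin (b + 1) → N.V)
      (s : Fin (c + 1) → N.V) (t : Fin (d + 1) → N.V),
      IsDiPath N.edge p u (N.leaf i) ∧ IsDiPath N.edge q u (N.leaf j) ∧
      IsDiPath N.edge s v u ∧ IsDiPath N.edge t v (N.leaf k) ∧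
      IntDisj p q ∧ IntDisj p s ∧ IntDisj p t ∧ IntDisj q s ∧ IntDisj q t ∧ IntDisj s t


section DiWalk

variable {V : Type} {E : V → V → Prop}

theorem DiWalk.zero (u : V) : DiWalk E u u 0 :=
  ⟨fun _ => u, rfl, rfl, fun i => i.elim0⟩

theorem DiWalk.snoc {u x y : V} {n : ℕ} (h : DiWalk E u x n) (e : E x y) :
    DiWalk E u y (n + 1) := by
  obtain ⟨f, h0, hl, he⟩ := h
  refine ⟨Fin.snoc f y, ?_, by simp, fun i => ?_⟩
  · simpa using h0
  · induction i using Fin.lastCases with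
    | last => simpa [hl] using e
    | cast j => rw [Fin.succ_castSucc, Fin.snoc_castSucc, Fin.snoc_castSucc]; exact he j

theorem exists_diWalk_of_reflTransGen {u v : V} (h : Relation.ReflTransGen E u v) :
    ∃ n, DiWalk E u v n := by
  induction h with
  | refl => exact ⟨0, .zero u⟩
  | tail _ e ih =>
    obtain ⟨n, hn⟩ := ih
    exact ⟨n + 1, hn.snoc e⟩

variable {n : ℕ} {f : Fin (n + 1) → V}

theorem reflTransGen_apply_of_le (hf : ∀ i : Fin n, E (f i.castSucc) (f i.succ))
    {a b : Fin (n + 1)} (hab : a ≤ b) : Relation.ReflTransGen E (f a) (f b) := by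
  induction b using Fin.induction with
  | zero => rw [Fin.le_zero_iff.mp hab]
  | succ b ih =>
    rcases hab.eq_or_lt with rfl | hlt
    · rfl
    · exact (ih (Fin.le_castSucc_iff.mpr hlt)).tail (hf b)

theorem transGen_apply_of_lt (hf : ∀ i : Fin n, E (f i.castSucc) (f i.succ))
    {a b : Fin (n + 1)} (hab : a < b) : Relation.TransGen E (f a) (f b) := by
  obtain ⟨b, rfl⟩ := Fin.exists_succ_eq.mpr (Fin.ne_zero_of_lt hab)
  exact .tail' (reflTransGen_apply_of_le hf (Fin.le_castSucc_iff.mpr hab)) (hf b)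

theorem DiWalk.length_lt_card [Fintype V] (hE : ∀ v, ¬ Relation.TransGen E v v) {u v : V}
    (h : DiWalk E u v n) : n < Fintype.card V := by
  by_contra! hn
  obtain ⟨f, -, -, he⟩ := h
  obtain ⟨x, y, hxy, hfxy⟩ := Fintype.exists_ne_map_eq_of_card_lt f (by simpa using hn)
  rcases hxy.lt_or_gt with hlt | hlt <;> exact hE _ (hfxy ▸ transGen_apply_of_lt he hlt)

theorem IsDiPath.reflTransGen_start_apply {u v : V} (hf : IsDiPath E f u v) (a : Fin (n + 1)) :
    Relation.ReflTransGen E u (f a) :=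
  hf.1 ▸ reflTransGen_apply_of_le hf.2.2.1 (Fin.zero_le a)

theorem IsDiPath.reflTransGen_apply_end {u v : V} (hf : IsDiPath E f u v) (a : Fin (n + 1)) :
    Relation.ReflTransGen E (f a) v :=
  hf.2.1 ▸ reflTransGen_apply_of_le hf.2.2.1 (Fin.le_last a)

end DiWalk

namespace PhyloNet

variable {X : Type} (N : PhyloNet X)

attribute [local instance] PhyloNet.fin

theorem bddAbove_diWalk_length (u v : N.V) : BddAbove {n | DiWalk N.edge u v n} :=
  ⟨Fintype.card N.V, fun _ h => (DiWalk.length_lt_card N.acyclic h).le⟩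

theorem diWalk_dep (v : N.V) : DiWalk N.edge N.root v (N.dep v) :=
  Nat.sSup_mem (exists_diWalk_of_reflTransGen (N.reach v)) (N.bddAbove_diWalk_length _ _)

variable {N}

theorem dep_lt_of_edge {x y : N.V} (e : N.edge x y) : N.dep x < N.dep y :=
  le_csSup (N.bddAbove_diWalk_length _ _) ((N.diWalk_dep x).snoc e)

theorem dep_lt_of_transGen {x y : N.V} (h : Relation.TransGen N.edge x y) :
    N.dep x < N.dep y := by
  induction h with
  | single e => exact dep_lt_of_edge e
  | tail _ e ih => exact ih.trans (dep_lt_of_edge e)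

theorem dep_le_of_anc {x y : N.V} (h : N.anc x y) : N.dep x ≤ N.dep y := by
  rcases Relation.reflTransGen_iff_eq_or_transGen.mp h with rfl | h
  · rfl
  · exact (dep_lt_of_transGen h).le

/-- A deepest common ancestor below `c` is a lowest common ancestor, since depth strictly
increases along edges. -/
theorem exists_isLCA_anc {c u₁ u₂ : N.V} (h₁ : N.anc c u₁) (h₂ : N.anc c u₂) :
    ∃ m, N.IsLCA u₁ u₂ m ∧ N.anc c m := by
  obtain ⟨m, ⟨hcm, hm₁, hm₂⟩, hmax⟩ :=
    (Set.toFinite {z : N.V | N.anc c z ∧ N.anc z u₁ ∧ N.anc z u₂}).exists_maximalFor N.dep _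
      ⟨c, .refl, h₁, h₂⟩
  refine ⟨m, ⟨hm₁, hm₂, fun z hmz hz₁ hz₂ => ?_⟩, hcm⟩
  rcases Relation.reflTransGen_iff_eq_or_transGen.mp hmz with rfl | hmz
  · rfl
  · have hlt := dep_lt_of_transGen hmz
    exact absurd (hmax ⟨hcm.trans hmz.to_reflTransGen, hz₁, hz₂⟩ hlt.le) hlt.not_ge

theorem hN_le_of_anc {x : N.V} {i k : X} (hi : N.anc x (N.leaf i)) (hk : N.anc x (N.leaf k)) :
    N.hN i k ≤ N.lN - N.dep x := by
  obtain ⟨m, hm, hxm⟩ := exists_isLCA_anc hi hk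
  calc N.hN i k ≤ N.lN - N.dep m := Nat.sInf_le ⟨m, hm, rfl⟩
    _ ≤ N.lN - N.dep x := Nat.sub_le_sub_left (dep_le_of_anc hxm) _

end PhyloNet

theorem disjoint_path_step_general {X : Type} (N : PhyloNet X) (i j k : X)
    (v w : N.V)
    (hveq : N.lN - N.dep v = N.hN i j)
    (hlt : N.hN i j < N.hN i k)
    (a : ℕ) (p : Fin (a + 1) → N.V)
    (hp : IsDiPath N.edge p v (N.leaf i)) :
    ∀ (c : ℕ) (t : Fin (c + 1) → N.V), IsDiPath N.edge t w (N.leaf k) →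
      ∃ (a' : ℕ) (p' : Fin (a' + 1) → N.V),
        IsDiPath N.edge p' v (N.leaf i) ∧ IntDisj p' t := by
  intro c t ht
  -- `p` and `t` share no node: a shared node would be a common ancestor of `i` and `k`
  -- lying below `v`, hence of height at most `h_N(i,j)`.
  refine ⟨a, p, hp, fun x y hxy => absurd ?_ hlt.not_ge⟩
  calc N.hN i k ≤ N.lN - N.dep (p x) :=
        PhyloNet.hN_le_of_anc (hp.reflTransGen_apply_end x) (hxy ▸ ht.reflTransGen_apply_end y)
    _ ≤ N.lN - N.dep v :=
        Nat.sub_le_sub_left (PhyloNet.dep_le_of_anc (hp.reflTransGen_start_apply x)) _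
    _ = N.hN i j := hveq

/-- the disjointness step in the proof that height dominance implies
triplet consistency.  Let `v` be a common ancestor of leaves `i, j` realizing
`h_N(i,j)` and `w` a common ancestor of `i, k` realizing `h_N(i,k)`, with
`h_N(i,j) < h_N(i,k)`, and suppose there are internally node-disjoint paths from
`v` to `i` and to `j`.  Then every directed path from `w` to `k` is internally
node-disjoint from some directed path from `v` to `i`. -/
theorem disjoint_path_step {X : Type} (N : PhyloNet X) (i j k : X)
    (hij : i ≠ j) (hik : i ≠ k) (hjk : j ≠ k) (v w : N.V)
    (hvi : N.anc v (N.leaf i)) (hvj : N.anc v (N.leaf j))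
    (hveq : N.lN - N.dep v = N.hN i j)
    (hwi : N.anc w (N.leaf i)) (hwk : N.anc w (N.leaf k))
    (hweq : N.lN - N.dep w = N.hN i k)
    (hlt : N.hN i j < N.hN i k)
    (a b : ℕ) (p : Fin (a + 1) → N.V) (q : Fin (b + 1) → N.V)
    (hp : IsDiPath N.edge p v (N.leaf i)) (hq : IsDiPath N.edge q v (N.leaf j))
    (hpq : IntDisj p q) :
    ∀ (c : ℕ) (t : Fin (c + 1) → N.V), IsDiPath N.edge t w (N.leaf k) →
      ∃ (a' : ℕ) (p' : Fin (a' + 1) → N.V),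
        IsDiPath N.edge p' v (N.leaf i) ∧ IntDisj p' t :=
  disjoint_path_step_general N i j k v w hveq hlt a p hp
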